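/- Let $X_1,\dots,X_l$ be mutually independent random variables with values in finite nonempty sets $D_1,\dots,D_l$, let $\Omega=\prod_{i=1}^l D_i$ carry the product probability measure, let $E_1,\dots,E_m\subseteq\Omega$ be events, and let $N(E_j)$ denote the set of events lopsidependent (in the Moser–Tardos sense) with $E_j$. Then the Moser–Tardos lopsidependency graph is an Erdős–Spencer lopsidependency graph: for every $j$ and every $I\subseteq\{1,\dots,m\}\setminus\{j\}$ with $E_i\notin N(E_j)$ for all $i\in I$ and $\Pr\big[\bigcap_{i\in I}\overline{E_i}\big]>0$, it holds that $\Pr\big[E_j \mid \bigcap_{i\in I}\overline{E_i}\big]\le\Pr[E_j]$. -/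

import Mathlib

/-! Variable framework: `l` mutually independent random variables taking values
in finite nonempty sets `D i`; assignments are elements of `Ω = ∀ i, D i`;
the product probability measure is given by weights `w i : D i → ℝ`
(nonnegative, summing to 1 on each coordinate); events are subsets of `Ω`. -/

/-- A set `S` of coordinates determines the event `E` if membership in `E`
only depends on the values of the coordinates in `S`. -/
def Determines {l : ℕ} {D : Fin l → Type*} (S : Set (Fin l))
    (E : Set (∀ i, D i)) : Prop :=
  ∀ α β : ∀ i, D i, (∀ i ∈ S, α i = β i) → (α ∈ E ↔ β ∈ E)

/-- The scope of an event: the minimal set of coordinates that determines it,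
i.e. the intersection of all determining sets of coordinates. -/
def scope {l : ℕ} {D : Fin l → Type*} (E : Set (∀ i, D i)) : Set (Fin l) :=
  ⋂₀ { S : Set (Fin l) | Determines S E }

/-- `Ej` is variable-dependent directed lopsidependent (VDL) on `Ei`:
there is an assignment `α` under which `Ei` occurs and `Ej` does not, and
an assignment `β` differing from `α` only in coordinates in `scope Ei`
under which `Ej` occurs. -/
def VDL {l : ℕ} {D : Fin l → Type*} (Ei Ej : Set (∀ i, D i)) : Prop :=
  ∃ α β : ∀ i, D i,
    α ∈ Ei ∧ α ∉ Ej ∧ (∀ i, i ∉ scope Ei → β i = α i) ∧ β ∈ Ej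

/-- The VDL out-neighborhood `Γ(E j)` of the event `E j` among the events
`E 1, …, E m`: the set of those events that are VDL on `E j`. -/
def Gamma {l m : ℕ} {D : Fin l → Type*} (E : Fin m → Set (∀ i, D i))
    (j : Fin m) : Set (Set (∀ i, D i)) :=
  {F | (∃ k, E k = F) ∧ VDL (E j) F}

/-- The probability of the event `E` under the product probability measure
determined by the coordinate-wise weights `w`. -/
noncomputable def Pr {l : ℕ} {D : Fin l → Type*} [∀ i, Fintype (D i)]
    (w : ∀ i, D i → ℝ) (E : Set (∀ i, D i)) : ℝ :=
  ∑ α : ∀ i, D i, Set.indicator E (fun a => ∏ i, w i (a i)) α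

/-- Moser–Tardos lopsidependency: there exist assignments `α, β` differing
only on coordinates in `scope Ei ∩ scope Ej` such that `Ei` occurs under `α`,
`Ej` occurs under `β`, and either `Ei` does not occur under `β` or `Ej` does
not occur under `α`. -/
def Lopsidependent {l : ℕ} {D : Fin l → Type*}
    (Ei Ej : Set (∀ i, D i)) : Prop :=
  ∃ α β : ∀ i, D i,
    (∀ i, i ∉ scope Ei ∩ scope Ej → α i = β i) ∧
    α ∈ Ei ∧ β ∈ Ej ∧ (β ∉ Ei ∨ α ∉ Ej)

/-- `N(E j)`: the set of events among `E 1, …, E m` that are Moser–Tardos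
lopsidependent with `E j`. -/
def MTNeighborhood {l m : ℕ} {D : Fin l → Type*}
    (E : Fin m → Set (∀ i, D i)) (j : Fin m) : Set (Set (∀ i, D i)) :=
  {F | (∃ k, E k = F) ∧ Lopsidependent F (E j)}


section MTAux
variable {l : ℕ} {D : Fin l → Type*}

lemma determines_univ (E : Set (∀ i, D i)) : Determines Set.univ E := by
  intro α β h
  have : α = β := funext fun i => h i (Set.mem_univ i)
  rw [this]

lemma determines_inter {S₁ S₂ : Set (Fin l)} {E : Set (∀ i, D i)}
    (h₁ : Determines S₁ E) (h₂ : Determines S₂ E) :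
    Determines (S₁ ∩ S₂) E := by
  classical
  intro α β hab
  have hγ1 : α ∈ E ↔ (fun i => if i ∈ S₁ then α i else β i) ∈ E :=
    h₁ α _ (fun i hi => by simp [hi])
  have hγ2 : (fun i => if i ∈ S₁ then α i else β i) ∈ E ↔ β ∈ E := by
    refine h₂ _ β (fun i hi => ?_)
    by_cases h : i ∈ S₁
    · simpa [h] using hab i ⟨h, hi⟩
    · simp [h]
  exact hγ1.trans hγ2

lemma scope_determines (E : Set (∀ i, D i)) : Determines (scope E) E := by
  classical
  obtain ⟨S₀, hS₀, hmin⟩ : ∃ S₀ ∈ {S : Set (Fin l) | Determines S E},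
      ∀ S' ∈ {S : Set (Fin l) | Determines S E}, id S' ≤ id S₀ → id S₀ = id S' := by
    obtain ⟨S₀, hS₀, hm⟩ := (Set.toFinite {S : Set (Fin l) | Determines S E}).exists_minimalFor
      id _ ⟨Set.univ, determines_univ E⟩
    exact ⟨S₀, hS₀, fun S' hS' hle => le_antisymm (hm hS' hle) hle⟩
  have hscope : scope E = S₀ := by
    apply Set.Subset.antisymm
    · exact Set.sInter_subset_of_mem hS₀
    · refine Set.subset_sInter (fun S hS => ?_)
      have h1 : Determines (S ∩ S₀) E := determines_inter hS hS₀
      have h2 : id S₀ = id (S ∩ S₀) := hmin _ h1 Set.inter_subset_right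
      simp only [id] at h2
      rw [h2]
      exact Set.inter_subset_left
  rw [hscope]
  exact hS₀

end MTAux

/-- The Moser–Tardos lopsidependency graph is an Erdős–Spencer lopsidependency
graph: conditioning on the non-occurrence of any set of events not adjacent to
`E j` does not increase the probability of `E j`. -/
theorem MT_lopsidependency_is_ErdosSpencer
    {l m : ℕ} {D : Fin l → Type*} [∀ i, Fintype (D i)] [∀ i, Nonempty (D i)]
    (w : ∀ i, D i → ℝ) (hw0 : ∀ i x, 0 ≤ w i x)
    (hw1 : ∀ i, ∑ x : D i, w i x = 1)
    (E : Fin m → Set (∀ i, D i))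
    (j : Fin m) (I : Set (Fin m)) (hjI : j ∉ I)
    (hI : ∀ i ∈ I, E i ∉ MTNeighborhood E j)
    (hpos : 0 < Pr w (⋂ i ∈ I, (E i)ᶜ)) :
    Pr w (E j ∩ ⋂ i ∈ I, (E i)ᶜ) / Pr w (⋂ i ∈ I, (E i)ᶜ) ≤ Pr w (E j) := by
  classical
  set C : Set (∀ i, D i) := ⋂ i ∈ I, (E i)ᶜ with hC
  set S : Set (Fin l) := scope (E j) with hS
  set f : (∀ i, D i) → ℝ := fun α => ∏ i, w i (α i) with hfdef
  have hf0 : ∀ α, 0 ≤ f α := fun α => Finset.prod_nonneg fun i _ => hw0 i (α i)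
  have hsum1 : ∑ α : ∀ i, D i, f α = 1 := by
    rw [hfdef, ← Fintype.prod_sum]
    simp [hw1]
  have PrEq : ∀ Es : Set (∀ i, D i), Pr w Es = ∑ α : ∀ i, D i, if α ∈ Es then f α else 0 := by
    intro Es
    simp [Pr, Set.indicator_apply, hfdef]
  have hnl : ∀ i ∈ I, ¬ Lopsidependent (E i) (E j) :=
    fun i hi h => hI i hi ⟨⟨i, rfl⟩, h⟩
  have hSj : Determines S (E j) := scope_determines (E j)
  -- the key structural claim
  have dagger : ∀ α γ : ∀ i, D i,
      α ∈ E j → α ∈ C → (∀ i, i ∉ S → γ i = α i) → γ ∈ C := by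
    intro α γ hαj hαC hγα
    rw [hC, Set.mem_iInter₂] at hαC ⊢
    intro i hi
    intro hγEi
    set σ : ∀ i, D i := fun k => if k ∈ S ∧ k ∉ scope (E i) then α k else γ k with hσ
    have hσEi : σ ∈ E i := by
      refine (scope_determines (E i) σ γ fun k hk => ?_).mpr hγEi
      have hns : ¬ (k ∈ S ∧ k ∉ scope (E i)) := fun h => h.2 hk
      simp [hσ, hns]
    have hagree : ∀ k, k ∉ scope (E i) ∩ scope (E j) → σ k = α k := by
      intro k hk
      by_cases hkS : k ∈ S
      · have hks : k ∉ scope (E i) := fun h => hk ⟨h, hkS⟩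
        simp [hσ, hkS, hks]
      · have hns : ¬ (k ∈ S ∧ k ∉ scope (E i)) := fun h => hkS h.1
        simp only [hσ, if_neg hns]
        exact hγα k hkS
    exact hnl i hi ⟨σ, α, hagree, hσEi, hαj, Or.inl (hαC i hi)⟩
  -- merge function
  set mg : (∀ i, D i) → (∀ i, D i) → (∀ i, D i) :=
    fun x y => fun i => if i ∈ S then x i else y i with hmg
  have hinv : Function.Involutive
      (fun p : (∀ i, D i) × (∀ i, D i) => (mg p.1 p.2, mg p.2 p.1)) := by
    intro p
    refine Prod.ext ?_ ?_ <;> · funext i; simp only [hmg]; split_ifs <;> rfl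
  have hfmg : ∀ a b : ∀ i, D i, f (mg a b) * f (mg b a) = f a * f b := by
    intro a b
    rw [hfdef]
    simp only
    rw [← Finset.prod_mul_distrib, ← Finset.prod_mul_distrib]
    refine Finset.prod_congr rfl fun i _ => ?_
    simp only [hmg]
    split_ifs <;> ring
  have key : Pr w (E j ∩ C) ≤ Pr w (E j) * Pr w C := by
    have h1 : Pr w (E j ∩ C)
        = ∑ p : (∀ i, D i) × (∀ i, D i), (if p.1 ∈ E j ∩ C then f p.1 * f p.2 else 0) := by
      rw [PrEq, Fintype.sum_prod_type]
      refine Finset.sum_congr rfl fun α _ => ?_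
      by_cases h : α ∈ E j ∩ C
      · simp only [h, if_pos, ← Finset.mul_sum, hsum1, mul_one]
      · simp [h]
    have h2 : Pr w (E j) * Pr w C
        = ∑ p : (∀ i, D i) × (∀ i, D i), (if p.1 ∈ E j ∧ p.2 ∈ C then f p.1 * f p.2 else 0) := by
      rw [PrEq, PrEq, Finset.sum_mul_sum, Fintype.sum_prod_type]
      refine Finset.sum_congr rfl fun α _ => Finset.sum_congr rfl fun β _ => ?_
      split_ifs with h h' h' <;> clear hC <;> simp_all
    have step1 : Pr w (E j ∩ C)
        ≤ ∑ p : (∀ i, D i) × (∀ i, D i),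
            (if mg p.1 p.2 ∈ E j ∧ mg p.2 p.1 ∈ C then f p.1 * f p.2 else 0) := by
      rw [h1]
      refine Finset.sum_le_sum fun p _ => ?_
      by_cases h : p.1 ∈ E j ∩ C
      · have h1' : mg p.1 p.2 ∈ E j := by
          refine (hSj (mg p.1 p.2) p.1 fun i hi => ?_).mpr h.1
          simp [hmg, hi]
        have h2' : mg p.2 p.1 ∈ C := by
          refine dagger p.1 (mg p.2 p.1) h.1 h.2 fun i hi => ?_
          simp [hmg, hi]
        rw [if_pos h, if_pos ⟨h1', h2'⟩]
      · rw [if_neg h]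
        split_ifs with h'
        · exact mul_nonneg (hf0 _) (hf0 _)
        · exact le_refl 0
    have step2 : ∑ p : (∀ i, D i) × (∀ i, D i),
          (if mg p.1 p.2 ∈ E j ∧ mg p.2 p.1 ∈ C then f p.1 * f p.2 else 0)
        = ∑ p : (∀ i, D i) × (∀ i, D i),
            (if p.1 ∈ E j ∧ p.2 ∈ C then f p.1 * f p.2 else 0) := by
      rw [← Equiv.sum_comp (Function.Involutive.toPerm _ hinv)
        (fun p : (∀ i, D i) × (∀ i, D i) => if p.1 ∈ E j ∧ p.2 ∈ C then f p.1 * f p.2 else 0)]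
      refine Finset.sum_congr rfl fun p _ => ?_
      have hp : (Function.Involutive.toPerm _ hinv) p = (mg p.1 p.2, mg p.2 p.1) := rfl
      rw [hp]
      by_cases h : mg p.1 p.2 ∈ E j ∧ mg p.2 p.1 ∈ C
      · rw [if_pos h, if_pos h, hfmg]
      · rw [if_neg h, if_neg h]
    rw [h2]
    rw [step2] at step1
    exact step1
  rw [div_le_iff₀ hpos]
  exact key
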